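/- (Theorem 2, finite-sample guarantee, inclusion form.) Let μ be a probability measure on ℝ^{(T+1)n} with finite first moment, supported on {w : first n coordinates equal x₀}, and let W = (w^1, …, w^N) be distributed according to the N-fold product measure μ^N. For each sample W, let (x^i(W), u^i(W)) be measurable functions such that w^i = x^i − Z blkdiag_{T+1}(A) x^i − Z blkdiag_{T+1}(B) u^i for every i (the data are consistent with the true dynamics), and define ŵ^i = x^i − Z𝒜̂x^i − Zℬ̂u^i, P̂_pred(W) = (1/N)Σ_i δ_{Φŵ^i}, and P̄_w(W) = (1/N)Σ_i δ_{w^i}. Suppose that for some κ > 0 and η ∈ (0,1), μ^N{ W : d_W(P̄_w(W), μ) > κ } ≤ η, and suppose the radius function satisfies ε(W) ≥ (1/N)Σ_{i=1}^N ‖R_Φ Φ Z Δℳ (Φŵ^i − [x^i; u^i])‖ + ‖R_Φ Φ Z‖ κ for every W. Then, with μ^N-probability at least 1 − η, the true closed-loop distribution P_cl = (R_ΦΦ)#μ satisfies d_W(P̂_pred(W), P_cl) ≤ ε(W); in particular, on this event, for every bounded Borel function h, the expectation of h under P_cl is at most the supremum of the expectation of h over all probability measures Q with d_W(P̂_pred(W),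 Q) ≤ ε(W). -/

import Mathlib

open MeasureTheory Matrix
open scoped ENNReal

/-- The ℓ¹-norm of a vector. -/
noncomputable def l1norm {ι : Type*} [Fintype ι] (v : ι → ℝ) : ℝ := ∑ i, |v i|

/-- The induced ℓ¹-norm of a matrix (maximum absolute column sum). -/
noncomputable def matL1 {ι κ : Type*} [Fintype ι] [Fintype κ] (M : Matrix ι κ ℝ) : ℝ :=
  ⨆ j, ∑ i, |M i j|

/-- The Wasserstein-1 distance (w.r.t. the ℓ¹-norm): infimum over couplings of the expected
ℓ¹-distance. -/
noncomputable def wass {ι : Type*} [Fintype ι] (P Q : Measure (ι → ℝ)) : ℝ :=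
  sInf { r | ∃ π : Measure ((ι → ℝ) × (ι → ℝ)),
    IsProbabilityMeasure π ∧ π.map Prod.fst = P ∧ π.map Prod.snd = Q ∧
    r = ∫ p, l1norm (p.1 - p.2) ∂π }

/-- The uniform empirical measure `(1/N) ∑ᵢ δ_{a i}`. -/
noncomputable def emp {ι : Type*} [Fintype ι] {N : ℕ} (a : Fin N → (ι → ℝ)) :
    Measure (ι → ℝ) :=
  (N : ℝ≥0∞)⁻¹ • ∑ i, Measure.dirac (a i)

/-- The block-downshift matrix `Z`, with `n × n` identity blocks on the first block
subdiagonal and zero blocks elsewhere. -/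
noncomputable def dshift (T n : ℕ) : Matrix (Fin (T+1) × Fin n) (Fin (T+1) × Fin n) ℝ :=
  fun p q => if (p.1 : ℕ) = (q.1 : ℕ) + 1 ∧ p.2 = q.2 then 1 else 0

/-- `blkdiag T M`: block-diagonal matrix with `T+1` copies of `M` on the diagonal. -/
noncomputable def blkdiag (T : ℕ) {n m : ℕ} (M : Matrix (Fin n) (Fin m) ℝ) :
    Matrix (Fin (T+1) × Fin n) (Fin (T+1) × Fin m) ℝ :=
  fun p q => if p.1 = q.1 then M p.2 q.2 else 0

/-- A block-partitioned matrix is block lower triangular: all blocks strictly above the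
block diagonal are zero. -/
def BlockLT {T n m : ℕ} (M : Matrix (Fin (T+1) × Fin m) (Fin (T+1) × Fin n) ℝ) : Prop :=
  ∀ p q, p.1 < q.1 → M p q = 0

open ProbabilityTheory

/-!
Since the data obey the true dynamics, `w = ŵ + Z Δℳ [x; u]`, and `R_Φ (I + Φ Z Δℳ) = I`
(the matrix `Φ Z Δℳ` is strictly block lower triangular) turns this into
`Φ ŵ - R_Φ Φ w = R_Φ Φ Z Δℳ (Φ ŵ - [x; u])`. All disturbance vectors share the initial block
`x₀`, and on such vectors `v ↦ R_Φ Φ v` is Lipschitz with constant `‖R_Φ Φ Z‖`. Lifting a coupling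
of `P̄_w` and `μ` to the sample indices (by disintegration) and pushing it forward gives
`d_W(P̂_pred, P_cl) ≤ (1/N) ∑ᵢ ‖Φ ŵⁱ - R_Φ Φ wⁱ‖ + ‖R_Φ Φ Z‖ d_W(P̄_w, μ)`, which is at most `ε(W)`
on the event `d_W(P̄_w, μ) ≤ κ` of probability at least `1 - η`. On that event `P_cl` itself
belongs to the ambiguity ball, which bounds its expectations by the worst case.
-/

section L1

variable {ι κ : Type*} [Fintype ι] [Fintype κ]

lemma l1norm_nonneg (v : ι → ℝ) : 0 ≤ l1norm v :=
  Finset.sum_nonneg fun i _ => abs_nonneg (v i)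

lemma l1norm_add_le (v w : ι → ℝ) : l1norm (v + w) ≤ l1norm v + l1norm w := by
  simp only [l1norm, Pi.add_apply, ← Finset.sum_add_distrib]
  exact Finset.sum_le_sum fun i _ => abs_add_le (v i) (w i)

lemma l1norm_sub_le_l1norm_sub_add_l1norm_sub (u v w : ι → ℝ) :
    l1norm (u - w) ≤ l1norm (u - v) + l1norm (v - w) := by
  simpa using l1norm_add_le (u - v) (v - w)

lemma l1norm_sub_le (v w : ι → ℝ) : l1norm (v - w) ≤ l1norm v + l1norm w := by
  simpa [l1norm] using l1norm_sub_le_l1norm_sub_add_l1norm_sub v 0 w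

lemma measurable_l1norm : Measurable (l1norm : (ι → ℝ) → ℝ) :=
  (continuous_finsetSum _ fun i _ => (continuous_apply i).abs).measurable

lemma measurable_l1norm_sub : Measurable fun p : (ι → ℝ) × (ι → ℝ) => l1norm (p.1 - p.2) :=
  measurable_l1norm.comp (measurable_fst.sub measurable_snd)

lemma Matrix.measurable_mulVec (M : Matrix ι κ ℝ) : Measurable (M *ᵥ ·) :=
  (continuous_const.matrix_mulVec continuous_id).measurable

lemma sum_abs_le_matL1 (M : Matrix ι κ ℝ) (j : κ) : ∑ i, |M i j| ≤ matL1 M :=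
  le_ciSup (f := fun j => ∑ i, |M i j|) (Set.finite_range _).bddAbove j

lemma matL1_nonneg (M : Matrix ι κ ℝ) : 0 ≤ matL1 M :=
  Real.iSup_nonneg fun _ => Finset.sum_nonneg fun _ _ => abs_nonneg _

lemma l1norm_mulVec_le_of_sum_abs_le (M : Matrix ι κ ℝ) (v : κ → ℝ) {C : ℝ}
    (hC : ∀ j, v j ≠ 0 → ∑ i, |M i j| ≤ C) : l1norm (M *ᵥ v) ≤ C * l1norm v := by
  have hcol : ∀ j, (∑ i, |M i j|) * |v j| ≤ C * |v j| := fun j => by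
    by_cases hj : v j = 0
    · simp [hj]
    · exact mul_le_mul_of_nonneg_right (hC j hj) (abs_nonneg _)
  calc l1norm (M *ᵥ v) = ∑ i, |∑ j, M i j * v j| := rfl
    _ ≤ ∑ i, ∑ j, |M i j| * |v j| :=
        Finset.sum_le_sum fun i _ => (Finset.abs_sum_le_sum_abs _ _).trans_eq (by simp [abs_mul])
    _ = ∑ j, (∑ i, |M i j|) * |v j| := by rw [Finset.sum_comm]; simp [Finset.sum_mul]
    _ ≤ ∑ j, C * |v j| := Finset.sum_le_sum fun j _ => hcol j
    _ = C * l1norm v := by rw [l1norm, Finset.mul_sum]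

lemma l1norm_mulVec_le (M : Matrix ι κ ℝ) (v : κ → ℝ) : l1norm (M *ᵥ v) ≤ matL1 M * l1norm v :=
  l1norm_mulVec_le_of_sum_abs_le M v fun j _ => sum_abs_le_matL1 M j

end L1

section Wasserstein

variable {ι κ : Type*} [Fintype ι] [Fintype κ]

lemma wass_le_integral {P Q : Measure (ι → ℝ)} (π : Measure ((ι → ℝ) × (ι → ℝ)))
    [IsProbabilityMeasure π] (h₁ : π.map Prod.fst = P) (h₂ : π.map Prod.snd = Q) :
    wass P Q ≤ ∫ p, l1norm (p.1 - p.2) ∂π :=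
  csInf_le ⟨0, by rintro _ ⟨π, -, -, -, rfl⟩; exact integral_nonneg fun p => l1norm_nonneg _⟩
    ⟨π, inferInstance, h₁, h₂, rfl⟩

lemma le_add_mul_csInf {s : Set ℝ} (hs : s.Nonempty) {x A c : ℝ} (hc : 0 ≤ c)
    (h : ∀ r ∈ s, x ≤ A + c * r) : x ≤ A + c * sInf s := by
  rcases hc.eq_or_lt with rfl | hc
  · obtain ⟨r, hr⟩ := hs
    simpa using h r hr
  · have : (x - A) / c ≤ sInf s :=
      le_csInf hs fun r hr => (div_le_iff₀' hc).2 (by linarith [h r hr])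
    linarith [(div_le_iff₀' hc).1 this]

lemma le_add_mul_wass {P Q : Measure (ι → ℝ)} [IsProbabilityMeasure P] [IsProbabilityMeasure Q]
    {x A c : ℝ} (hc : 0 ≤ c)
    (h : ∀ π : Measure ((ι → ℝ) × (ι → ℝ)), IsProbabilityMeasure π →
      π.map Prod.fst = P → π.map Prod.snd = Q → x ≤ A + c * ∫ p, l1norm (p.1 - p.2) ∂π) :
    x ≤ A + c * wass P Q :=
  le_add_mul_csInf (s := {r | ∃ π : Measure ((ι → ℝ) × (ι → ℝ)), IsProbabilityMeasure π ∧
      π.map Prod.fst = P ∧ π.map Prod.snd = Q ∧ r = ∫ p, l1norm (p.1 - p.2) ∂π})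
    ⟨_, P.prod Q, inferInstance, by simp, by simp, rfl⟩ hc
    (by rintro r ⟨π, hπ, h₁, h₂, rfl⟩; exact h π hπ h₁ h₂)

lemma integrable_l1norm_sub_of_map {P Q : Measure (ι → ℝ)} {π : Measure ((ι → ℝ) × (ι → ℝ))}
    (h₁ : π.map Prod.fst = P) (h₂ : π.map Prod.snd = Q)
    (hP : Integrable l1norm P) (hQ : Integrable l1norm Q) :
    Integrable (fun p => l1norm (p.1 - p.2)) π := by
  subst h₁ h₂
  have hP' := (integrable_map_measure measurable_l1norm.aestronglyMeasurable
    measurable_fst.aemeasurable).1 hP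
  have hQ' := (integrable_map_measure measurable_l1norm.aestronglyMeasurable
    measurable_snd.aemeasurable).1 hQ
  refine (hP'.add hQ').mono' measurable_l1norm_sub.aestronglyMeasurable
    (.of_forall fun p => ?_)
  rw [Real.norm_of_nonneg (l1norm_nonneg _)]
  exact l1norm_sub_le p.1 p.2

lemma MeasureTheory.Measure.compProd_comap_map_prodMap {α X Y : Type*} [MeasurableSpace α]
    [MeasurableSpace X] [MeasurableSpace Y] (P : Measure α) [SFinite P] (κ : Kernel X Y)
    [IsSFiniteKernel κ] {f : α → X} (hf : Measurable f) :
    (P ⊗ₘ κ.comap f hf).map (Prod.map f id) = P.map f ⊗ₘ κ := by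
  ext s hs
  rw [Measure.map_apply (hf.prodMap measurable_id) hs, Measure.compProd_apply hs,
    Measure.compProd_apply (hf.prodMap measurable_id hs),
    lintegral_map (Kernel.measurable_kernel_prodMk_left hs) hf]
  rfl

lemma exists_lift_of_map_fst_eq_map {α X Y : Type*} [MeasurableSpace α] [MeasurableSpace X]
    [MeasurableSpace Y] [StandardBorelSpace Y] [Nonempty Y]
    (P : Measure α) [IsProbabilityMeasure P] {f : α → X} (hf : Measurable f)
    (π : Measure (X × Y)) [IsFiniteMeasure π] (hπ : π.map Prod.fst = P.map f) :
    ∃ ρ : Measure (α × Y), IsProbabilityMeasure ρ ∧ ρ.map Prod.fst = P ∧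
      ρ.map (Prod.map f id) = π :=
  ⟨P ⊗ₘ π.condKernel.comap f hf, inferInstance, Measure.fst_compProd _ _, by
    rw [Measure.compProd_comap_map_prodMap _ _ hf, ← hπ]
    exact π.disintegrate π.condKernel⟩

lemma emp_eq_map_uniformOn {N : ℕ} (a : Fin N → ι → ℝ) :
    emp a = (uniformOn (Set.univ : Set (Fin N))).map a := by
  classical
  ext s hs
  have hpre : a ⁻¹' s = ↑(Finset.univ.filter fun i => a i ∈ s) := by ext; simp
  rw [Measure.map_apply (measurable_of_finite a) hs, uniformOn_univ, hpre,
    Measure.count_apply_finset, emp, Measure.smul_apply, Measure.finsetSum_apply]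
  simp [Measure.dirac_apply' _ hs, Set.indicator_apply, ENNReal.div_eq_inv_mul, Finset.sum_boole]

lemma integral_uniformOn_univ {N : ℕ} (φ : Fin N → ℝ) :
    ∫ i, φ i ∂(uniformOn (Set.univ : Set (Fin N))) = (N : ℝ)⁻¹ * ∑ i, φ i := by
  rw [integral_fintype .of_finite]
  simp [Measure.real, uniformOn_univ, Finset.mul_sum]

lemma integrable_l1norm_map_mulVec {μ : Measure (κ → ℝ)} (hμ : Integrable l1norm μ)
    (M : Matrix ι κ ℝ) : Integrable l1norm (μ.map (M *ᵥ ·)) := by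
  refine (integrable_map_measure measurable_l1norm.aestronglyMeasurable
    (M.measurable_mulVec).aemeasurable).2 ((hμ.const_mul (matL1 M)).mono'
      (measurable_l1norm.comp M.measurable_mulVec).aestronglyMeasurable
      (.of_forall fun v => ?_))
  rw [Function.comp_apply, Real.norm_of_nonneg (l1norm_nonneg _)]
  exact l1norm_mulVec_le M v

variable {α : Type*} [MeasurableSpace α] (P : Measure α) [IsProbabilityMeasure P]
  {Q : Measure (ι → ℝ)}
  {a : α → ι → ℝ} {b : α → κ → ℝ} {F : (ι → ℝ) → κ → ℝ} {S : Set (ι → ℝ)} {c : ℝ}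

lemma exists_coupling_map_integral_le (ha : Measurable a) (hb : Measurable b) (hF : Measurable F)
    (hLip : ∀ v ∈ S, ∀ v' ∈ S, l1norm (F v - F v') ≤ c * l1norm (v - v'))
    (haS : ∀ x, a x ∈ S) (hQS : ∀ᵐ v ∂Q, v ∈ S)
    (hab : Integrable (fun x => l1norm (b x - F (a x))) P)
    (π : Measure ((ι → ℝ) × (ι → ℝ))) [IsProbabilityMeasure π]
    (h₁ : π.map Prod.fst = P.map a) (h₂ : π.map Prod.snd = Q)
    (hπ : Integrable (fun p => l1norm (p.1 - p.2)) π) :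
    ∃ π' : Measure ((κ → ℝ) × (κ → ℝ)), IsProbabilityMeasure π' ∧
      π'.map Prod.fst = P.map b ∧ π'.map Prod.snd = Q.map F ∧
      ∫ p, l1norm (p.1 - p.2) ∂π' ≤
        ∫ x, l1norm (b x - F (a x)) ∂P + c * ∫ p, l1norm (p.1 - p.2) ∂π := by
  obtain ⟨ρ, hρ, hρ₁, hρ₂⟩ := exists_lift_of_map_fst_eq_map P ha π h₁
  have hG : Measurable fun p : α × (ι → ℝ) => (b p.1, F p.2) :=
    (hb.comp measurable_fst).prodMk (hF.comp measurable_snd)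
  have hρsnd : ρ.map Prod.snd = Q := by
    rw [← h₂, ← hρ₂, Measure.map_map measurable_snd (ha.prodMap measurable_id)]
    rfl
  have hρS : ∀ᵐ p ∂ρ, p.2 ∈ S := ae_of_ae_map measurable_snd.aemeasurable (hρsnd ▸ hQS)
  have hg : Measurable fun x => l1norm (b x - F (a x)) :=
    measurable_l1norm.comp (hb.sub (hF.comp ha))
  have hab' : Integrable (fun p : α × (ι → ℝ) => l1norm (b p.1 - F (a p.1))) ρ := by
    rw [← hρ₁] at hab
    exact (integrable_map_measure hab.aestronglyMeasurable measurable_fst.aemeasurable).1 hab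
  have hπ' : Integrable (fun p : α × (ι → ℝ) => l1norm (a p.1 - p.2)) ρ := by
    rw [← hρ₂] at hπ
    exact (integrable_map_measure hπ.aestronglyMeasurable
      (ha.prodMap measurable_id).aemeasurable).1 hπ
  refine ⟨ρ.map fun p => (b p.1, F p.2), Measure.isProbabilityMeasure_map hG.aemeasurable,
    ?_, ?_, ?_⟩
  · rw [Measure.map_map measurable_fst hG, ← hρ₁, Measure.map_map hb measurable_fst]
    rfl
  · rw [Measure.map_map measurable_snd hG, ← hρsnd, Measure.map_map hF measurable_snd]
    rfl
  calc ∫ p, l1norm (p.1 - p.2) ∂(ρ.map fun p => (b p.1, F p.2))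
      = ∫ p, l1norm (b p.1 - F p.2) ∂ρ :=
        integral_map hG.aemeasurable measurable_l1norm_sub.aestronglyMeasurable
    _ ≤ ∫ p, (l1norm (b p.1 - F (a p.1)) + c * l1norm (a p.1 - p.2)) ∂ρ := by
        refine integral_mono_of_nonneg (.of_forall fun p => l1norm_nonneg _)
          (hab'.add (hπ'.const_mul c)) (hρS.mono fun p hp => ?_)
        exact (l1norm_sub_le_l1norm_sub_add_l1norm_sub _ (F (a p.1)) _).trans
          (add_le_add le_rfl (hLip _ (haS _) _ hp))
    _ = ∫ x, l1norm (b x - F (a x)) ∂P + c * ∫ p, l1norm (p.1 - p.2) ∂π := by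
        rw [integral_add hab' (hπ'.const_mul c), integral_const_mul, ← hρ₁, ← hρ₂,
          integral_map measurable_fst.aemeasurable hg.aestronglyMeasurable,
          integral_map (ha.prodMap measurable_id).aemeasurable
            (measurable_l1norm_sub (ι := ι)).aestronglyMeasurable]
        rfl

theorem wass_map_le [IsProbabilityMeasure Q] (ha : Measurable a) (hb : Measurable b)
    (hF : Measurable F) (hc : 0 ≤ c)
    (hLip : ∀ v ∈ S, ∀ v' ∈ S, l1norm (F v - F v') ≤ c * l1norm (v - v'))
    (haS : ∀ x, a x ∈ S) (hQS : ∀ᵐ v ∂Q, v ∈ S)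
    (hPa : Integrable (fun x => l1norm (a x)) P) (hQ : Integrable l1norm Q)
    (hab : Integrable (fun x => l1norm (b x - F (a x))) P) :
    wass (P.map b) (Q.map F) ≤ ∫ x, l1norm (b x - F (a x)) ∂P + c * wass (P.map a) Q := by
  have := Measure.isProbabilityMeasure_map (μ := P) ha.aemeasurable
  have hPa' : Integrable l1norm (P.map a) :=
    (integrable_map_measure measurable_l1norm.aestronglyMeasurable ha.aemeasurable).2 hPa
  refine le_add_mul_wass hc fun π _ h₁ h₂ => ?_
  obtain ⟨π', _, h₁', h₂', hle⟩ := exists_coupling_map_integral_le P ha hb hF hLip haS hQS hab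
    π h₁ h₂ (integrable_l1norm_sub_of_map h₁ h₂ hPa' hQ)
  exact (wass_le_integral π' h₁' h₂').trans hle

end Wasserstein

lemma integral_le_of_forall_abs_le {Ω : Type*} [MeasurableSpace Ω] (Q : Measure Ω)
    [IsProbabilityMeasure Q] {h : Ω → ℝ} {C : ℝ} (hC : ∀ y, |h y| ≤ C) : ∫ y, h y ∂Q ≤ C := by
  have := norm_integral_le_of_norm_le_const (μ := Q) (f := h) (.of_forall hC)
  simp only [probReal_univ, mul_one, Real.norm_eq_abs] at this
  exact (le_abs_self _).trans this

lemma one_sub_measure_le_of_ae {Ω : Type*} [MeasurableSpace Ω] {μ : Measure Ω}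
    [IsProbabilityMeasure μ] {A B : Set Ω} (h : ∀ᵐ ω ∂μ, ω ∉ A → ω ∈ B) : 1 - μ A ≤ μ B := by
  refine tsub_le_iff_left.2 ?_
  calc (1 : ℝ≥0∞) = μ Set.univ := measure_univ.symm
    _ ≤ μ (A ∪ B) := measure_mono_ae (h.mono fun ω hω _ => (em (ω ∈ A)).imp id hω)
    _ ≤ μ A + μ B := measure_union_le A B

lemma Matrix.det_one_add_eq_one {ι α R : Type*} [Fintype ι] [DecidableEq ι] [CommRing R]
    [LinearOrder α] (N : Matrix ι ι R) (b : ι → α) (hN : ∀ i j, b i ≤ b j → N i j = 0) :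
    (1 + N).det = 1 := by
  have hbt : (1 + N).BlockTriangular (OrderDual.toDual ∘ b) :=
    blockTriangular_one.add fun i j hij => hN i j hij.le
  rw [hbt.det]
  refine Finset.prod_eq_one fun k _ => ?_
  have hblock : (1 + N).toSquareBlock (OrderDual.toDual ∘ b) k = 1 := by
    ext ⟨i, hi⟩ ⟨j, hj⟩
    have hij : b i ≤ b j := le_of_eq (hi.trans hj.symm)
    simp [toSquareBlock_def, hN i j hij, Matrix.one_apply]
  rw [hblock, det_one]

lemma mulVec_sub_mul_mulVec_add {ι κ R : Type*} [Fintype ι] [Fintype κ] [DecidableEq ι]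
    [CommRing R] {Φ : Matrix ι κ R} {K : Matrix κ ι R} {RΦ : Matrix ι ι R}
    (hR : RΦ * (1 + Φ * K) = 1) (w : κ → R) (z : ι → R) :
    Φ *ᵥ w - (RΦ * Φ) *ᵥ (w + K *ᵥ z) = (RΦ * Φ * K) *ᵥ (Φ *ᵥ w - z) := by
  have hRK : RΦ * (Φ * K) = 1 - RΦ := by
    rw [mul_add, mul_one] at hR
    exact eq_sub_of_add_eq' hR
  have hRKΦ : RΦ * Φ * K * Φ = Φ - RΦ * Φ := by
    rw [Matrix.mul_assoc RΦ Φ K, hRK, Matrix.sub_mul, Matrix.one_mul]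
  rw [mulVec_sub, mulVec_mulVec, hRKΦ, sub_mulVec, mulVec_add, mulVec_mulVec]
  abel

section ClosedLoop

variable {n m T : ℕ}

lemma blkdiag_sub (M M' : Matrix (Fin n) (Fin m) ℝ) :
    blkdiag T (M - M') = blkdiag T M - blkdiag T M' := by
  ext p q
  by_cases h : p.1 = q.1 <;> simp [blkdiag, h]

lemma mul_dshift_apply {ι : Type*} (M : Matrix ι (Fin (T+1) × Fin n) ℝ) (i : ι)
    {p q : Fin (T+1) × Fin n} (h₁ : (p.1 : ℕ) = q.1 + 1) (h₂ : p.2 = q.2) :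
    (M * dshift T n) i q = M i p := by
  rw [mul_apply, Finset.sum_eq_single p]
  · simp [dshift, h₁, h₂]
  · intro p' _ hp'
    rw [dshift, if_neg, mul_zero]
    rintro ⟨h₁', h₂'⟩
    exact hp' (Prod.ext (Fin.ext (h₁'.trans h₁.symm)) (h₂'.trans h₂.symm))
  · simp

lemma l1norm_mulVec_sub_le {ι : Type*} [Fintype ι] (M : Matrix ι (Fin (T+1) × Fin n) ℝ)
    {v v' : Fin (T+1) × Fin n → ℝ} (h : ∀ j, v (0, j) = v' (0, j)) :
    l1norm (M *ᵥ v - M *ᵥ v') ≤ matL1 (M * dshift T n) * l1norm (v - v') := by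
  rw [← mulVec_sub]
  refine l1norm_mulVec_le_of_sum_abs_le M _ fun p hp => ?_
  obtain ⟨⟨_ | t, ht⟩, j⟩ := p
  · exact absurd (sub_eq_zero.2 (h j)) hp
  · calc ∑ i, |M i (⟨t + 1, ht⟩, j)|
        = ∑ i, |(M * dshift T n) i (⟨t, by omega⟩, j)| := by
          refine Finset.sum_congr rfl fun i _ => ?_
          rw [mul_dshift_apply M i (p := (⟨t + 1, ht⟩, j)) (q := (⟨t, by omega⟩, j)) rfl rfl]
      _ ≤ matL1 (M * dshift T n) := sum_abs_le_matL1 _ _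

lemma wass_emp_map_mulVec_le {ι : Type*} [Fintype ι] {N : ℕ} [NeZero N]
    (M : Matrix ι (Fin (T+1) × Fin n) ℝ) (b : Fin N → ι → ℝ) {x0 : Fin n → ℝ}
    {W : Fin N → Fin (T+1) × Fin n → ℝ} (hW : ∀ i j, W i (0, j) = x0 j)
    {μ : Measure (Fin (T+1) × Fin n → ℝ)} [IsProbabilityMeasure μ] (hμ : Integrable l1norm μ)
    (hμx0 : ∀ᵐ v ∂μ, ∀ j, v (0, j) = x0 j) :
    wass (emp b) (μ.map (M *ᵥ ·)) ≤
      (N : ℝ)⁻¹ * ∑ i, l1norm (b i - M *ᵥ W i) + matL1 (M * dshift T n) * wass (emp W) μ := by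
  rw [emp_eq_map_uniformOn, emp_eq_map_uniformOn W, ← integral_uniformOn_univ]
  exact wass_map_le _ (measurable_of_finite _) (measurable_of_finite _) M.measurable_mulVec
    (S := {v | ∀ j, v (0, j) = x0 j}) (matL1_nonneg _)
    (fun v hv v' hv' => l1norm_mulVec_sub_le M fun j => (hv j).trans (hv' j).symm)
    hW hμx0 .of_finite hμ .of_finite

lemma mul_dshift_mul_apply_eq_zero {ι κ : Type*} [Fintype ι]
    (Φ : Matrix ι (Fin (T+1) × Fin n) ℝ) (Δ : Matrix (Fin (T+1) × Fin n) κ ℝ)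
    (s : ι → Fin (T+1)) (s' : κ → Fin (T+1))
    (hΦ : ∀ i l, s i < l.1 → Φ i l = 0) (hΔ : ∀ k j, k.1 ≠ s' j → Δ k j = 0)
    {i : ι} {j : κ} (hij : s i ≤ s' j) :
    (Φ * dshift T n * Δ) i j = 0 := by
  rw [mul_apply]
  refine Finset.sum_eq_zero fun k _ => ?_
  by_cases hk : k.1 = s' j
  · have hΦZ : (Φ * dshift T n) i k = 0 := by
      rw [mul_apply]
      refine Finset.sum_eq_zero fun l _ => ?_
      by_cases hl : (l.1 : ℕ) = k.1 + 1 ∧ l.2 = k.2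
      · rw [hΦ i l (by rw [Fin.lt_def, hl.1, hk]; exact Nat.lt_succ_of_le hij), zero_mul]
      · simp [dshift, hl]
    rw [hΦZ, zero_mul]
  · rw [hΔ k j hk, mul_zero]

def stage : (Fin (T+1) × Fin n) ⊕ (Fin (T+1) × Fin m) → Fin (T+1) :=
  Sum.elim Prod.fst Prod.fst

lemma det_one_add_fromRows_mul_dshift_mul_fromCols
    {Φx : Matrix (Fin (T+1) × Fin n) (Fin (T+1) × Fin n) ℝ}
    {Φu : Matrix (Fin (T+1) × Fin m) (Fin (T+1) × Fin n) ℝ} (hx : BlockLT Φx) (hu : BlockLT Φu)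
    (A' : Matrix (Fin n) (Fin n) ℝ) (B' : Matrix (Fin n) (Fin m) ℝ) :
    (1 + fromRows Φx Φu * dshift T n * fromCols (blkdiag T A') (blkdiag T B')).det = 1 := by
  refine Matrix.det_one_add_eq_one _ stage fun i j hij =>
    mul_dshift_mul_apply_eq_zero _ _ stage stage (fun i l h => ?_) (fun k j h => ?_) hij
  · cases i with
    | inl p => exact hx p l h
    | inr p => exact hu p l h
  · cases j with
    | inl q => exact if_neg h
    | inr q => exact if_neg h

lemma eq_add_mulVec_sumElim (Ahat A : Matrix (Fin n) (Fin n) ℝ)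
    (Bhat B : Matrix (Fin n) (Fin m) ℝ)
    {w what x : Fin (T+1) × Fin n → ℝ} {u : Fin (T+1) × Fin m → ℝ}
    (hw : w = x - (dshift T n * blkdiag T A) *ᵥ x - (dshift T n * blkdiag T B) *ᵥ u)
    (hwhat : what = x - (dshift T n * blkdiag T Ahat) *ᵥ x - (dshift T n * blkdiag T Bhat) *ᵥ u) :
    w = what + (dshift T n * fromCols (blkdiag T (Ahat - A)) (blkdiag T (Bhat - B))) *ᵥ
      Sum.elim x u := by
  rw [← mulVec_mulVec, fromCols_mulVec_sumElim, blkdiag_sub, blkdiag_sub, hw, hwhat]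
  simp only [← mulVec_mulVec, sub_mulVec, mulVec_add, mulVec_sub]
  abel

end ClosedLoop

theorem stmt13_general {n m T N : ℕ} (hN : 0 < N)
    (Ahat A : Matrix (Fin n) (Fin n) ℝ) (Bhat B : Matrix (Fin n) (Fin m) ℝ)
    (Φx : Matrix (Fin (T+1) × Fin n) (Fin (T+1) × Fin n) ℝ)
    (Φu : Matrix (Fin (T+1) × Fin m) (Fin (T+1) × Fin n) ℝ)
    (hx : BlockLT Φx) (hu : BlockLT Φu)
    (Φ : Matrix ((Fin (T+1) × Fin n) ⊕ (Fin (T+1) × Fin m)) (Fin (T+1) × Fin n) ℝ)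
    (hΦ : Φ = Matrix.fromRows Φx Φu)
    (ΔM : Matrix (Fin (T+1) × Fin n) ((Fin (T+1) × Fin n) ⊕ (Fin (T+1) × Fin m)) ℝ)
    (hΔM : ΔM = Matrix.fromCols (blkdiag T (Ahat - A)) (blkdiag T (Bhat - B)))
    (RΦ : Matrix ((Fin (T+1) × Fin n) ⊕ (Fin (T+1) × Fin m))
                 ((Fin (T+1) × Fin n) ⊕ (Fin (T+1) × Fin m)) ℝ)
    (hR : RΦ = (1 + Φ * dshift T n * ΔM)⁻¹)
    (x0 : Fin n → ℝ)
    (μ : Measure ((Fin (T+1) × Fin n) → ℝ)) [IsProbabilityMeasure μ]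
    (hμmom : Integrable (fun v => l1norm v) μ)
    (hμsupp : ∀ᵐ v ∂μ, ∀ j, v (0, j) = x0 j)
    (X : (Fin N → (Fin (T+1) × Fin n) → ℝ) → Fin N → (Fin (T+1) × Fin n) → ℝ)
    (U : (Fin N → (Fin (T+1) × Fin n) → ℝ) → Fin N → (Fin (T+1) × Fin m) → ℝ)
    (hconsistent : ∀ W i, W i = X W i - (dshift T n * blkdiag T A) *ᵥ X W i
        - (dshift T n * blkdiag T B) *ᵥ U W i)
    (what : (Fin N → (Fin (T+1) × Fin n) → ℝ) → Fin N → (Fin (T+1) × Fin n) → ℝ)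
    (hwhat : ∀ W i, what W i = X W i - (dshift T n * blkdiag T Ahat) *ᵥ X W i
        - (dshift T n * blkdiag T Bhat) *ᵥ U W i)
    (κ η : ℝ)
    (hconc : (Measure.pi fun _ : Fin N => μ) {W | wass (emp W) μ > κ} ≤ ENNReal.ofReal η)
    (ε : (Fin N → (Fin (T+1) × Fin n) → ℝ) → ℝ)
    (hε : ∀ W, ε W ≥ (N : ℝ)⁻¹ * ∑ i, l1norm
          ((RΦ * Φ * dshift T n * ΔM) *ᵥ (Φ *ᵥ what W i - Sum.elim (X W i) (U W i)))
        + matL1 (RΦ * Φ * dshift T n) * κ) :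
    (Measure.pi fun _ : Fin N => μ)
      {W | wass (emp (fun i => Φ *ᵥ what W i)) (μ.map (fun v => (RΦ * Φ) *ᵥ v)) ≤ ε W ∧
        ∀ h : (((Fin (T+1) × Fin n) ⊕ (Fin (T+1) × Fin m)) → ℝ) → ℝ,
          Measurable h → (∃ C, ∀ y, |h y| ≤ C) →
          ∫ y, h y ∂(μ.map (fun v => (RΦ * Φ) *ᵥ v)) ≤
            sSup {r | ∃ Q : Measure ((((Fin (T+1) × Fin n) ⊕ (Fin (T+1) × Fin m)) → ℝ)),
              IsProbabilityMeasure Q ∧ Integrable (fun v => l1norm v) Q ∧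
              wass (emp (fun i => Φ *ᵥ what W i)) Q ≤ ε W ∧ r = ∫ y, h y ∂Q}}
      ≥ 1 - ENNReal.ofReal η := by
  have : NeZero N := ⟨hN.ne'⟩
  have hRΦ : RΦ * (1 + Φ * dshift T n * ΔM) = 1 := by
    rw [hR]
    refine nonsing_inv_mul _ ?_
    rw [hΦ, hΔM, det_one_add_fromRows_mul_dshift_mul_fromCols hx hu]
    exact isUnit_one
  have hshift : ∀ W i, Φ *ᵥ what W i - (RΦ * Φ) *ᵥ W i =
      (RΦ * Φ * dshift T n * ΔM) *ᵥ (Φ *ᵥ what W i - Sum.elim (X W i) (U W i)) := fun W i => by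
    rw [eq_add_mulVec_sumElim Ahat A Bhat B (hconsistent W i) (hwhat W i), ← hΔM,
      Matrix.mul_assoc (RΦ * Φ)]
    exact mulVec_sub_mul_mulVec_add (by rwa [← Matrix.mul_assoc]) _ _
  have hball : ∀ W, (∀ i j, W i (0, j) = x0 j) → wass (emp W) μ ≤ κ →
      wass (emp fun i => Φ *ᵥ what W i) (μ.map ((RΦ * Φ) *ᵥ ·)) ≤ ε W := fun W hW hWκ => by
    refine (wass_emp_map_mulVec_le _ _ hW hμmom hμsupp).trans (le_trans ?_ (hε W))
    simp only [hshift]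
    exact add_le_add le_rfl (mul_le_mul_of_nonneg_left hWκ (matL1_nonneg _))
  refine (tsub_le_tsub_left hconc 1).trans (one_sub_measure_le_of_ae ?_)
  filter_upwards [ae_all_iff.2 fun i : Fin N => (Measure.tendsto_eval_ae_ae (i := i)).eventually
    hμsupp] with W hW hWκ
  have hW := hball W hW (not_lt.1 hWκ)
  refine ⟨hW, fun h _ ⟨C, hC⟩ => le_csSup ⟨C, ?_⟩ ⟨_, Measure.isProbabilityMeasure_map
    (measurable_mulVec _).aemeasurable, integrable_l1norm_map_mulVec hμmom _, hW, rfl⟩⟩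
  rintro _ ⟨Q, hQ, -, -, rfl⟩
  exact integral_le_of_forall_abs_le Q hC

/-- **Theorem 2, finite-sample guarantee, inclusion form.** If the
disturbance samples concentrate around `μ` in Wasserstein distance with probability
`1 − η`, and the ambiguity radius dominates the distribution-shift bound, then with
probability at least `1 − η` the true closed-loop distribution lies in the ambiguity
ball around the empirical predictive distribution; in particular, its expectations of
bounded Borel functions are dominated by the worst case over the ambiguity ball. -/
theorem stmt13 {n m T N : ℕ} (hn : 0 < n) (hm : 0 < m) (hT : 0 < T) (hN : 0 < N)
    (Ahat A : Matrix (Fin n) (Fin n) ℝ) (Bhat B : Matrix (Fin n) (Fin m) ℝ)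
    (Φx : Matrix (Fin (T+1) × Fin n) (Fin (T+1) × Fin n) ℝ)
    (Φu : Matrix (Fin (T+1) × Fin m) (Fin (T+1) × Fin n) ℝ)
    (hx : BlockLT Φx) (hu : BlockLT Φu)
    (hSLS : (1 - dshift T n * blkdiag T Ahat) * Φx - dshift T n * blkdiag T Bhat * Φu = 1)
    (Φ : Matrix ((Fin (T+1) × Fin n) ⊕ (Fin (T+1) × Fin m)) (Fin (T+1) × Fin n) ℝ)
    (hΦ : Φ = Matrix.fromRows Φx Φu)
    (ΔM : Matrix (Fin (T+1) × Fin n) ((Fin (T+1) × Fin n) ⊕ (Fin (T+1) × Fin m)) ℝ)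
    (hΔM : ΔM = Matrix.fromCols (blkdiag T (Ahat - A)) (blkdiag T (Bhat - B)))
    (RΦ : Matrix ((Fin (T+1) × Fin n) ⊕ (Fin (T+1) × Fin m))
                 ((Fin (T+1) × Fin n) ⊕ (Fin (T+1) × Fin m)) ℝ)
    (hR : RΦ = (1 + Φ * dshift T n * ΔM)⁻¹)
    (x0 : Fin n → ℝ)
    (μ : Measure ((Fin (T+1) × Fin n) → ℝ)) [IsProbabilityMeasure μ]
    (hμmom : Integrable (fun v => l1norm v) μ)
    (hμsupp : ∀ᵐ v ∂μ, ∀ j, v (0, j) = x0 j)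
    (X : (Fin N → (Fin (T+1) × Fin n) → ℝ) → Fin N → (Fin (T+1) × Fin n) → ℝ)
    (U : (Fin N → (Fin (T+1) × Fin n) → ℝ) → Fin N → (Fin (T+1) × Fin m) → ℝ)
    (hXmeas : Measurable X) (hUmeas : Measurable U)
    (hconsistent : ∀ W i, W i = X W i - (dshift T n * blkdiag T A) *ᵥ X W i
        - (dshift T n * blkdiag T B) *ᵥ U W i)
    (what : (Fin N → (Fin (T+1) × Fin n) → ℝ) → Fin N → (Fin (T+1) × Fin n) → ℝ)
    (hwhat : ∀ W i, what W i = X W i - (dshift T n * blkdiag T Ahat) *ᵥ X W i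
        - (dshift T n * blkdiag T Bhat) *ᵥ U W i)
    (κ η : ℝ) (hκ : 0 < κ) (hη0 : 0 < η) (hη1 : η < 1)
    (hconc : (Measure.pi fun _ : Fin N => μ) {W | wass (emp W) μ > κ} ≤ ENNReal.ofReal η)
    (ε : (Fin N → (Fin (T+1) × Fin n) → ℝ) → ℝ)
    (hε : ∀ W, ε W ≥ (N : ℝ)⁻¹ * ∑ i, l1norm
          ((RΦ * Φ * dshift T n * ΔM) *ᵥ (Φ *ᵥ what W i - Sum.elim (X W i) (U W i)))
        + matL1 (RΦ * Φ * dshift T n) * κ) :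
    (Measure.pi fun _ : Fin N => μ)
      {W | wass (emp (fun i => Φ *ᵥ what W i)) (μ.map (fun v => (RΦ * Φ) *ᵥ v)) ≤ ε W ∧
        ∀ h : (((Fin (T+1) × Fin n) ⊕ (Fin (T+1) × Fin m)) → ℝ) → ℝ,
          Measurable h → (∃ C, ∀ y, |h y| ≤ C) →
          ∫ y, h y ∂(μ.map (fun v => (RΦ * Φ) *ᵥ v)) ≤
            sSup {r | ∃ Q : Measure ((((Fin (T+1) × Fin n) ⊕ (Fin (T+1) × Fin m)) → ℝ)),
              IsProbabilityMeasure Q ∧ Integrable (fun v => l1norm v) Q ∧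
              wass (emp (fun i => Φ *ᵥ what W i)) Q ≤ ε W ∧ r = ∫ y, h y ∂Q}}
      ≥ 1 - ENNReal.ofReal η :=
  stmt13_general hN Ahat A Bhat B Φx Φu hx hu Φ hΦ ΔM hΔM RΦ hR x0 μ hμmom hμsupp X U hconsistent
    what hwhat κ η hconc ε hε
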